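/- Let G be strongly connected with diameter d and max weight magnitude w_max, and suppose P ∈ Δ_E is ε̃-suboptimal for min_{P ∈ Δ_E} ⟨P,W⟩ + 3 d w_max ‖P𝟏 - Pᵀ𝟏‖₁ (whose optimal value is μ(G)). Then ⟨P,W⟩ ≤ μ(G) + ε̃ and ‖P𝟏 - Pᵀ𝟏‖₁ ≤ ε̃/(d w_max). -/

import Mathlib

/-!
Strong connectivity with diameter `d` lets one repair any `P ∈ Δ_E` into a circulation `P + M`:
route the imbalance of every vertex through a hub along walks of length at most `d`, so that `M`
has mass at most `d ‖P𝟏 - Pᵀ𝟏‖₁` and weight at most `w_max` times its mass. Cancelling cycles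
shows that a nonnegative circulation `F` on `E` has `⟨F,W⟩ ≥ μ(G) · ∑ F`; with `μ(G) ≥ -w_max`
this gives `μ(G) ≤ ⟨P,W⟩ + 2 d w_max ‖P𝟏 - Pᵀ𝟏‖₁`. Against the penalty `3 d w_max ‖P𝟏 - Pᵀ𝟏‖₁`
of the suboptimality hypothesis, this leaves `d w_max ‖P𝟏 - Pᵀ𝟏‖₁ ≤ ε̃`.
-/

open Finset

/-- A directed cycle: a nonempty list of distinct vertices whose consecutive
pairs (cyclically) are edges of `E`. -/
def IsCycle {n : ℕ} (E : Finset (Fin n × Fin n)) (c : List (Fin n)) : Prop :=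
  c ≠ [] ∧ c.Nodup ∧ ∀ p ∈ c.zip (c.rotate 1), p ∈ E

/-- Mean weight of a cycle. -/
noncomputable def meanWeight {n : ℕ} (w : Fin n × Fin n → ℝ) (c : List (Fin n)) : ℝ :=
  ((c.zip (c.rotate 1)).map w).sum / c.length

/-- Min-mean-cycle value of the digraph `(V, E, w)`. -/
noncomputable def mmc {n : ℕ} (E : Finset (Fin n × Fin n)) (w : Fin n × Fin n → ℝ) : ℝ :=
  sInf {x : ℝ | ∃ c, IsCycle E c ∧ meanWeight w c = x}

/-- Membership in `Δ_E`: a nonnegative matrix supported on `E` with total sum 1. -/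
def InDeltaE {n : ℕ} (E : Finset (Fin n × Fin n)) (P : Matrix (Fin n) (Fin n) ℝ) : Prop :=
  (∀ i j, 0 ≤ P i j) ∧ (∀ i j, (i, j) ∉ E → P i j = 0) ∧ (∑ i, ∑ j, P i j) = 1

/-- A circulation: netflow is balanced at every vertex. -/
def IsBalanced {n : ℕ} (P : Matrix (Fin n) (Fin n) ℝ) : Prop :=
  ∀ i, (∑ j, P i j) = ∑ j, P j i

/-- Total netflow imbalance `‖P𝟏 - Pᵀ𝟏‖₁`. -/
noncomputable def imb {n : ℕ} (P : Matrix (Fin n) (Fin n) ℝ) : ℝ :=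
  ∑ i, |(∑ j, P i j) - ∑ j, P j i|

/-- Entrywise ℓ₁ norm of a matrix. -/
noncomputable def l1 {n : ℕ} (P : Matrix (Fin n) (Fin n) ℝ) : ℝ :=
  ∑ i, ∑ j, |P i j|

/-- There is a directed path from `i` to `j` of length at most `d`. -/
def ConnectsWithin {n : ℕ} (E : Finset (Fin n × Fin n)) (d : ℕ) (i j : Fin n) : Prop :=
  ∃ l : List (Fin n), l.length ≤ d ∧ List.Chain (fun a b => (a, b) ∈ E) i l ∧
    (i :: l).getLast (List.cons_ne_nil _ _) = j

/-- A directed walk from `s` to `v` along edges of `E`, recorded by its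
list of vertices after `s`. -/
def IsWalkFrom {n : ℕ} (E : Finset (Fin n × Fin n)) (s v : Fin n) (l : List (Fin n)) : Prop :=
  List.Chain (fun a b => (a, b) ∈ E) s l ∧ (s :: l).getLast (List.cons_ne_nil _ _) = v

/-- Weight of a walk. -/
noncomputable def walkWeight {n : ℕ} (w : Fin n × Fin n → ℝ) (s : Fin n) (l : List (Fin n)) : ℝ :=
  (((s :: l).zip l).map w).sum

theorem Function.exists_iterate_mem_periodicPts {α : Type*} [Finite α] (f : α → α) (x : α) :
    ∃ a, f^[a] x ∈ Function.periodicPts f := by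
  obtain ⟨a, b, hne, heq⟩ := Finite.exists_ne_map_eq_of_infinite fun k : ℕ => f^[k] x
  wlog hab : a < b generalizing a b
  · exact this b a hne.symm heq.symm (by omega)
  refine ⟨a, Function.mk_mem_periodicPts (Nat.sub_pos_of_lt hab) ?_⟩
  rw [Function.IsPeriodicPt, Function.IsFixedPt, ← Function.iterate_add_apply,
    Nat.sub_add_cancel hab.le]
  exact heq.symm

theorem Cycle.Chain.forall_mem_zip_rotate_one {α : Type*} {r : α → α → Prop} {l : List α}
    (h : Cycle.Chain r (l : Cycle α)) : ∀ p ∈ l.zip (l.rotate 1), r p.1 p.2 := by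
  cases l with
  | nil => simp
  | cons a l =>
    rw [Cycle.chain_coe_cons, ← List.cons_append, List.isChain_cons_append_singleton_iff_forall₂,
      List.forall₂_iff_zip] at h
    rw [List.rotate_cons_succ, List.rotate_zero]
    exact fun p hp => h.2 hp

theorem List.IsChain.forall_mem_zip_cons {α : Type*} {r : α → α → Prop} {s : α} {l : List α}
    (h : List.IsChain r (s :: l)) : ∀ p ∈ (s :: l).zip l, r p.1 p.2 := by
  induction l generalizing s with
  | nil => simp
  | cons a l ih =>
    rw [List.isChain_cons_cons] at h
    simp only [List.zip_cons_cons, List.mem_cons, forall_eq_or_imp]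
    exact ⟨h.1, ih h.2⟩

/-- The cycle is the periodic orbit reached by repeatedly following some edge out of the
current vertex; such an edge exists at every vertex reached. -/
theorem exists_cycle_of_forall_exists_rel {α : Type*} [Finite α] {r : α → α → Prop}
    (hr : ∀ i j, r i j → ∃ k, r j k) {i j : α} (hij : r i j) :
    ∃ c : List α, c ≠ [] ∧ c.Nodup ∧ ∀ p ∈ c.zip (c.rotate 1), r p.1 p.2 := by
  classical
  let g : α → α := fun x => if h : ∃ y, r x y then h.choose else x
  have hg : ∀ x, (∃ y, r x y) → r x (g x) := fun x h => by
    simp only [g, dif_pos h]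
    exact h.choose_spec
  have hgood : ∀ k, ∃ y, r (g^[k] i) y := by
    intro k
    induction k with
    | zero => exact ⟨j, hij⟩
    | succ k ih => rw [Function.iterate_succ_apply']; exact hr _ _ (hg _ ih)
  obtain ⟨a, ha⟩ := Function.exists_iterate_mem_periodicPts g i
  have hchain : Cycle.Chain r (Function.periodicOrbit g (g^[a] i)) := by
    rw [Function.periodicOrbit_chain' r ha]
    intro k
    rw [Function.iterate_succ_apply', ← Function.iterate_add_apply]
    exact hg _ (hgood _)
  refine ⟨(List.range (Function.minimalPeriod g (g^[a] i))).map (g^[·] (g^[a] i)), ?_,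
    Cycle.nodup_coe_iff.mp Function.nodup_periodicOrbit, hchain.forall_mem_zip_rotate_one⟩
  simpa using (Function.minimalPeriod_pos_of_mem_periodicPts ha).ne'

section Flows

variable {n : ℕ}

/-- The paper's `⟨P, W⟩`, with `W` given as a function on edges. -/
noncomputable def pairing (f : Fin n × Fin n → ℝ) : Matrix (Fin n) (Fin n) ℝ →ₗ[ℝ] ℝ where
  toFun P := ∑ i, ∑ j, P i j * f (i, j)
  map_add' P Q := by simp only [Matrix.add_apply, add_mul, sum_add_distrib]
  map_smul' c P := by
    simp only [Matrix.smul_apply, smul_eq_mul, mul_assoc, mul_sum, RingHom.id_apply]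

theorem pairing_apply (f : Fin n × Fin n → ℝ) (P : Matrix (Fin n) (Fin n) ℝ) :
    pairing f P = ∑ i, ∑ j, P i j * f (i, j) := rfl

theorem pairing_const (c : ℝ) (P : Matrix (Fin n) (Fin n) ℝ) :
    pairing (fun _ => c) P = c * ∑ i, ∑ j, P i j := by
  simp only [pairing_apply, mul_sum, mul_comm]

theorem pairing_le_pairing {E : Finset (Fin n × Fin n)} {f g : Fin n × Fin n → ℝ}
    (hfg : ∀ e ∈ E, f e ≤ g e) {P : Matrix (Fin n) (Fin n) ℝ} (hP : ∀ i j, 0 ≤ P i j)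
    (hPE : ∀ i j, (i, j) ∉ E → P i j = 0) : pairing f P ≤ pairing g P := by
  rw [pairing_apply, pairing_apply]
  refine sum_le_sum fun i _ => sum_le_sum fun j _ => ?_
  by_cases hij : (i, j) ∈ E
  · exact mul_le_mul_of_nonneg_left (hfg _ hij) (hP i j)
  · simp [hPE i j hij]

def incidence (v : Fin n) (e : Fin n × Fin n) : ℝ :=
  (if e.1 = v then 1 else 0) - if e.2 = v then 1 else 0

theorem pairing_incidence (P : Matrix (Fin n) (Fin n) ℝ) (v : Fin n) :
    pairing (incidence v) P = ∑ j, P v j - ∑ j, P j v := by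
  simp [pairing_apply, incidence, mul_sub, sum_sub_distrib]

theorem sum_pairing_incidence (P : Matrix (Fin n) (Fin n) ℝ) :
    ∑ v, pairing (incidence v) P = 0 := by
  simp only [pairing_incidence, sum_sub_distrib]
  rw [sum_comm, sub_self]

theorem isBalanced_iff_pairing_incidence {P : Matrix (Fin n) (Fin n) ℝ} :
    IsBalanced P ↔ ∀ v, pairing (incidence v) P = 0 := by
  simp only [IsBalanced, pairing_incidence, sub_eq_zero]

theorem imb_eq_sum_abs_pairing_incidence (P : Matrix (Fin n) (Fin n) ℝ) :
    imb P = ∑ v, |pairing (incidence v) P| := by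
  simp only [imb, pairing_incidence]

noncomputable def edgeMatrix (L : List (Fin n × Fin n)) : Matrix (Fin n) (Fin n) ℝ :=
  fun i j => L.count (i, j)

theorem edgeMatrix_nonneg (L : List (Fin n × Fin n)) (i j : Fin n) : 0 ≤ edgeMatrix L i j :=
  Nat.cast_nonneg _

theorem edgeMatrix_eq_zero {L : List (Fin n × Fin n)} {i j : Fin n} (h : (i, j) ∉ L) :
    edgeMatrix L i j = 0 := by
  simp [edgeMatrix, List.count_eq_zero.2 h]

theorem pairing_edgeMatrix (f : Fin n × Fin n → ℝ) (L : List (Fin n × Fin n)) :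
    pairing f (edgeMatrix L) = (L.map f).sum := by
  rw [pairing_apply, ← Fintype.sum_prod_type' fun i j => edgeMatrix L i j * f (i, j),
    sum_list_map_count]
  refine (sum_subset (subset_univ _) fun e _ he => ?_).symm.trans (sum_congr rfl fun e _ => ?_)
  · simp [edgeMatrix, List.count_eq_zero.2 (List.mem_toFinset.not.1 he)]
  · simp only [edgeMatrix, nsmul_eq_mul]
    -- the two sides count with different (lawful) `BEq` instances on pairs
    congr
    exact lawful_beq_subsingleton _ _

theorem pairing_one_edgeMatrix (L : List (Fin n × Fin n)) :
    pairing (fun _ => 1) (edgeMatrix L) = L.length := by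
  simp [pairing_edgeMatrix]

end Flows

section Walks

variable {n : ℕ}

theorem sum_map_incidence (L : List (Fin n × Fin n)) (v : Fin n) :
    (L.map (incidence v)).sum = ((L.map Prod.fst).map fun u => if u = v then (1 : ℝ) else 0).sum
      - ((L.map Prod.snd).map fun u => if u = v then (1 : ℝ) else 0).sum := by
  induction L with
  | nil => simp
  | cons e L ih => simp only [List.map_cons, List.sum_cons, ih, incidence]; ring

theorem pairing_incidence_edgeMatrix_walk (s : Fin n) (l : List (Fin n)) (v : Fin n) :
    pairing (incidence v) (edgeMatrix ((s :: l).zip l)) =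
      (if s = v then 1 else 0) - if (s :: l).getLast (List.cons_ne_nil _ _) = v then 1 else 0 := by
  rw [pairing_edgeMatrix]
  induction l generalizing s with
  | nil =>
    simp only [List.zip_nil_right, List.map_nil, List.sum_nil, List.getLast_singleton]
    exact (sub_self _).symm
  | cons a l ih =>
    rw [List.zip_cons_cons, List.map_cons, List.sum_cons, ih,
      List.getLast_cons (List.cons_ne_nil _ _)]
    simp only [incidence]
    ring

theorem pairing_incidence_edgeMatrix_cycle (c : List (Fin n)) (v : Fin n) :
    pairing (incidence v) (edgeMatrix (c.zip (c.rotate 1))) = 0 := by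
  have hlen : c.length = (c.rotate 1).length := (c.length_rotate 1).symm
  rw [pairing_edgeMatrix, sum_map_incidence, List.map_fst_zip hlen.le, List.map_snd_zip hlen.ge,
    ((List.rotate_perm c 1).map _).sum_eq, sub_self]

theorem pairing_edgeMatrix_cycle (w : Fin n × Fin n → ℝ) {c : List (Fin n)} (hc : c ≠ []) :
    pairing w (edgeMatrix (c.zip (c.rotate 1))) = c.length * meanWeight w c := by
  have : (c.length : ℝ) ≠ 0 := by simpa using hc
  rw [pairing_edgeMatrix, meanWeight, mul_div_cancel₀ _ this]

theorem pairing_one_edgeMatrix_cycle (c : List (Fin n)) :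
    pairing (fun _ => 1) (edgeMatrix (c.zip (c.rotate 1))) = c.length := by
  simp [pairing_one_edgeMatrix]

end Walks

section Circulations

variable {n : ℕ}

noncomputable def edgeSupport (F : Matrix (Fin n) (Fin n) ℝ) : Finset (Fin n × Fin n) :=
  univ.filter fun e => F e.1 e.2 ≠ 0

theorem mem_edgeSupport {F : Matrix (Fin n) (Fin n) ℝ} {e : Fin n × Fin n} :
    e ∈ edgeSupport F ↔ F e.1 e.2 ≠ 0 := by
  simp [edgeSupport]

theorem exists_cycle_of_isBalanced {F : Matrix (Fin n) (Fin n) ℝ} (hF0 : ∀ i j, 0 ≤ F i j)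
    (hF : IsBalanced F) {i j : Fin n} (hij : 0 < F i j) :
    ∃ c : List (Fin n), c ≠ [] ∧ c.Nodup ∧ ∀ p ∈ c.zip (c.rotate 1), 0 < F p.1 p.2 := by
  refine exists_cycle_of_forall_exists_rel (r := fun i j => 0 < F i j) (fun i j hij => ?_) hij
  have hin : 0 < ∑ k, F k j := sum_pos' (fun k _ => hF0 k j) ⟨i, mem_univ i, hij⟩
  simpa using exists_lt_of_sum_lt (s := univ) (f := 0) (g := F j) (by simpa [hF j] using hin)

theorem exists_pos_sub_smul_cycle {F : Matrix (Fin n) (Fin n) ℝ} (hF0 : ∀ i j, 0 ≤ F i j)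
    {c : List (Fin n)} (hc : c ≠ []) (hnd : c.Nodup)
    (hpos : ∀ p ∈ c.zip (c.rotate 1), 0 < F p.1 p.2) :
    ∃ t : ℝ, 0 < t ∧ (∀ i j, 0 ≤ (F - t • edgeMatrix (c.zip (c.rotate 1))) i j) ∧
      edgeSupport (F - t • edgeMatrix (c.zip (c.rotate 1))) ⊂ edgeSupport F := by
  set Z := c.zip (c.rotate 1)
  have hlen : c.length ≤ (c.rotate 1).length := (c.length_rotate 1).ge
  have hZ : Z.Nodup := List.Nodup.of_map Prod.fst (by rwa [List.map_fst_zip hlen])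
  have hentry : ∀ i j, edgeMatrix Z i j = if (i, j) ∈ Z then 1 else 0 := by
    intro i j
    split_ifs with h
    · simp [edgeMatrix, List.count_eq_one_of_mem hZ h]
    · exact edgeMatrix_eq_zero h
  have hZne : Z.toFinset.Nonempty := by simpa [Z, ← List.length_pos_iff, hlen] using hc
  obtain ⟨e, he, hmin⟩ := Z.toFinset.exists_min_image (fun e => F e.1 e.2) hZne
  rw [List.mem_toFinset] at he
  refine ⟨F e.1 e.2, hpos e he, fun i j => ?_, ?_⟩
  · by_cases h : (i, j) ∈ Z
    · simpa [hentry, h] using hmin (i, j) (List.mem_toFinset.2 h)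
    · simpa [hentry, h] using hF0 i j
  rw [ssubset_iff_of_subset]
  · exact ⟨e, mem_edgeSupport.2 (hpos e he).ne', by simp [mem_edgeSupport, hentry, he]⟩
  · intro p hp
    rw [mem_edgeSupport] at hp ⊢
    contrapose! hp
    have hpZ : p ∉ Z := fun h => (hpos p h).ne' hp
    simp [hentry, hpZ, hp]

/-- Cycle cancelling: subtract a multiple of a cycle of the support until the flow vanishes. -/
theorem mul_pairing_one_le_pairing_of_isBalanced {E : Finset (Fin n × Fin n)}
    {w : Fin n × Fin n → ℝ} {μ : ℝ} (hμ : ∀ c, IsCycle E c → μ ≤ meanWeight w c)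
    {F : Matrix (Fin n) (Fin n) ℝ} (hF0 : ∀ i j, 0 ≤ F i j)
    (hFE : ∀ i j, (i, j) ∉ E → F i j = 0) (hF : IsBalanced F) :
    μ * pairing (fun _ => 1) F ≤ pairing w F := by
  induction hN : (edgeSupport F).card using Nat.strong_induction_on generalizing F with
  | _ N ih =>
    by_cases hzero : F = 0
    · simp [hzero]
    obtain ⟨i, j, hij⟩ : ∃ i j, 0 < F i j := by
      by_contra! h
      exact hzero (Matrix.ext fun i j => le_antisymm (h i j) (hF0 i j))
    obtain ⟨c, hc, hnd, hpos⟩ := exists_cycle_of_isBalanced hF0 hF hij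
    have hcyc : IsCycle E c :=
      ⟨hc, hnd, fun p hp => by_contra fun hpE => (hpos p hp).ne' (hFE _ _ hpE)⟩
    obtain ⟨t, ht, hF'0, hF'supp⟩ := exists_pos_sub_smul_cycle hF0 hc hnd hpos
    set C := edgeMatrix (c.zip (c.rotate 1))
    have hF'E : ∀ i j, (i, j) ∉ E → (F - t • C) i j = 0 := fun i j hij => by
      by_contra h
      exact mem_edgeSupport.1 (hF'supp.subset (mem_edgeSupport (e := (i, j)) |>.2 h)) (hFE i j hij)
    have hF'bal : IsBalanced (F - t • C) := isBalanced_iff_pairing_incidence.2 fun v => by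
      rw [map_sub, map_smul, pairing_incidence_edgeMatrix_cycle,
        isBalanced_iff_pairing_incidence.1 hF v, smul_zero, sub_zero]
    have hF' := ih _ (hN ▸ card_lt_card hF'supp) hF'0 hF'E hF'bal rfl
    have hC : μ * pairing (fun _ => 1) C ≤ pairing w C := by
      rw [pairing_one_edgeMatrix_cycle, pairing_edgeMatrix_cycle w hc, mul_comm]
      exact mul_le_mul_of_nonneg_left (hμ c hcyc) (Nat.cast_nonneg _)
    rw [← sub_add_cancel F (t • C), map_add, map_add, map_smul, map_smul, smul_eq_mul, smul_eq_mul]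
    nlinarith [mul_le_mul_of_nonneg_left hC ht.le]

end Circulations

section MinMeanCycle

variable {n : ℕ} {E : Finset (Fin n × Fin n)} {w : Fin n × Fin n → ℝ} {m : ℝ}

theorem le_meanWeight (hw : ∀ e ∈ E, m ≤ w e) {c : List (Fin n)} (hc : IsCycle E c) :
    m ≤ meanWeight w c := by
  obtain ⟨hne, -, hE⟩ := hc
  have hlen : (0 : ℝ) < c.length := by simpa [List.length_pos_iff] using hne
  rw [meanWeight, le_div_iff₀ hlen]
  have := List.card_nsmul_le_sum ((c.zip (c.rotate 1)).map w) m <| by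
    simp only [List.mem_map]
    rintro _ ⟨e, he, rfl⟩
    exact hw e (hE e he)
  simpa [mul_comm] using this

theorem mmc_le_meanWeight (hw : ∀ e ∈ E, m ≤ w e) {c : List (Fin n)} (hc : IsCycle E c) :
    mmc E w ≤ meanWeight w c :=
  csInf_le ⟨m, by rintro _ ⟨c', hc', rfl⟩; exact le_meanWeight hw hc'⟩ ⟨c, hc, rfl⟩

/-- Without cycles `mmc E w = sInf ∅ = 0`, hence the assumption `m ≤ 0`. -/
theorem le_mmc (hw : ∀ e ∈ E, m ≤ w e) (hm : m ≤ 0) : m ≤ mmc E w :=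
  Real.le_sInf (by rintro _ ⟨c, hc, rfl⟩; exact le_meanWeight hw hc) hm

end MinMeanCycle

section Rounding

variable {n : ℕ} {E : Finset (Fin n × Fin n)} {d : ℕ}

/-- Route the prescribed netflow through the hub `v₀` along walks of length at most `d`. -/
theorem exists_flow_pairing_incidence_eq (v₀ : Fin n) (hto : ∀ i, ConnectsWithin E d v₀ i)
    (hfrom : ∀ i, ConnectsWithin E d i v₀) (b : Fin n → ℝ) (hb : ∑ i, b i = 0) :
    ∃ M : Matrix (Fin n) (Fin n) ℝ, (∀ i j, 0 ≤ M i j) ∧ (∀ i j, (i, j) ∉ E → M i j = 0) ∧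
      (∀ v, pairing (incidence v) M = b v) ∧ pairing (fun _ => 1) M ≤ d * ∑ i, |b i| := by
  choose l₁ hl₁ using hto
  choose l₂ hl₂ using hfrom
  set W₁ := fun i => edgeMatrix ((v₀ :: l₁ i).zip (l₁ i))
  set W₂ := fun i => edgeMatrix ((i :: l₂ i).zip (l₂ i))
  have hW₁E : ∀ i x y, (x, y) ∉ E → W₁ i x y = 0 := fun i x y hxy =>
    edgeMatrix_eq_zero fun h => hxy ((hl₁ i).2.1.forall_mem_zip_cons _ h)
  have hW₂E : ∀ i x y, (x, y) ∉ E → W₂ i x y = 0 := fun i x y hxy =>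
    edgeMatrix_eq_zero fun h => hxy ((hl₂ i).2.1.forall_mem_zip_cons _ h)
  refine ⟨∑ i, ((b i)⁻ • W₁ i + (b i)⁺ • W₂ i), fun x y => ?_, fun x y hxy => ?_, fun v => ?_, ?_⟩
  · simp only [Matrix.sum_apply, Matrix.add_apply, Matrix.smul_apply, smul_eq_mul]
    exact sum_nonneg fun i _ => add_nonneg
      (mul_nonneg (negPart_nonneg _) (edgeMatrix_nonneg _ _ _))
      (mul_nonneg (posPart_nonneg _) (edgeMatrix_nonneg _ _ _))
  · simp [Matrix.sum_apply, hW₁E _ _ _ hxy, hW₂E _ _ _ hxy]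
  · calc pairing (incidence v) (∑ i, ((b i)⁻ • W₁ i + (b i)⁺ • W₂ i))
        = ∑ i, b i * ((if i = v then 1 else 0) - if v₀ = v then 1 else 0) := by
          simp only [map_sum, map_add, map_smul, smul_eq_mul, W₁, W₂,
            pairing_incidence_edgeMatrix_walk, (hl₁ _).2.2, (hl₂ _).2.2]
          refine sum_congr rfl fun i _ => ?_
          linear_combination ((if i = v then (1 : ℝ) else 0) - if v₀ = v then 1 else 0) *
            posPart_sub_negPart (b i)
      _ = b v := by simp [mul_sub, sum_sub_distrib, hb]
  · simp only [map_sum, map_add, map_smul, smul_eq_mul, W₁, W₂, pairing_one_edgeMatrix,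
      List.length_zip, List.length_cons, min_eq_right (Nat.le_succ _), mul_sum]
    refine sum_le_sum fun i _ => ?_
    have h₁ : ((l₁ i).length : ℝ) ≤ d := by exact_mod_cast (hl₁ i).1
    have h₂ : ((l₂ i).length : ℝ) ≤ d := by exact_mod_cast (hl₂ i).1
    rw [← posPart_add_negPart (b i)]
    nlinarith [negPart_nonneg (b i), posPart_nonneg (b i)]

theorem mmc_le_pairing_add_imb {w : Fin n × Fin n → ℝ} {wmax : ℝ}
    (hconn : ∀ i j, ConnectsWithin E d i j) (hw : ∀ e ∈ E, |w e| ≤ wmax) (hwmax : 0 ≤ wmax)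
    {P : Matrix (Fin n) (Fin n) ℝ} (hP : InDeltaE E P) :
    mmc E w ≤ pairing w P + 2 * d * wmax * imb P := by
  obtain ⟨hP0, hPE, hP1⟩ := hP
  have hlow : ∀ e ∈ E, -wmax ≤ w e := fun e he => neg_le_of_abs_le (hw e he)
  obtain ⟨v₀⟩ : Nonempty (Fin n) := by
    rw [← not_isEmpty_iff]
    intro
    simp at hP1
  obtain ⟨M, hM0, hME, hMnet, hMtot⟩ := exists_flow_pairing_incidence_eq v₀ (hconn v₀)
    (hconn · v₀) (fun v => -pairing (incidence v) P) (by simp [sum_pairing_incidence])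
  have hF := mul_pairing_one_le_pairing_of_isBalanced (fun c hc => mmc_le_meanWeight hlow hc)
    (F := P + M) (fun i j => add_nonneg (hP0 i j) (hM0 i j))
    (fun i j hij => by simp [hPE i j hij, hME i j hij])
    (isBalanced_iff_pairing_incidence.2 fun v => by rw [map_add, hMnet, add_neg_cancel])
  rw [map_add, map_add, pairing_const, hP1, one_mul] at hF
  have hσ0 : 0 ≤ pairing (fun _ => 1) M := by
    rw [pairing_const, one_mul]
    exact sum_nonneg fun i _ => sum_nonneg fun j _ => hM0 i j
  set σ := pairing (fun _ => 1) M
  have hMw : pairing w M ≤ wmax * σ := by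
    simpa [σ, pairing_const] using
      pairing_le_pairing (fun e he => le_of_abs_le (hw e he)) hM0 hME
  have hσ : σ ≤ d * imb P := by
    simpa only [abs_neg, ← imb_eq_sum_abs_pairing_incidence] using hMtot
  have hmmc := le_mmc hlow (neg_nonpos.2 hwmax)
  calc mmc E w ≤ pairing w P + (wmax - mmc E w) * σ := by linarith
    _ ≤ pairing w P + 2 * wmax * σ := by gcongr; linarith
    _ ≤ pairing w P + 2 * d * wmax * imb P := by nlinarith

theorem imb_eq_zero_of_connectsWithin_zero (hconn : ∀ i j, ConnectsWithin E 0 i j)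
    (P : Matrix (Fin n) (Fin n) ℝ) : imb P = 0 := by
  have heq : ∀ i j : Fin n, i = j := fun i j => by
    obtain ⟨l, hl, -, hlast⟩ := hconn i j
    rw [List.length_eq_zero_iff.1 (Nat.le_zero.1 hl)] at hlast
    exact hlast
  refine sum_eq_zero fun i _ => ?_
  rw [abs_eq_zero, sub_eq_zero]
  exact sum_congr rfl fun j _ => by obtain rfl := heq i j; rfl

end Rounding

theorem penalized_suboptimal_general {n : ℕ} (E : Finset (Fin n × Fin n))
    (w : Fin n × Fin n → ℝ) (d : ℕ) (wmax ε' : ℝ)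
    (hconn : ∀ i j : Fin n, ConnectsWithin E d i j)
    (hw : ∀ e ∈ E, |w e| ≤ wmax) (hwmax : 0 < wmax)
    (P : Matrix (Fin n) (Fin n) ℝ) (hP : InDeltaE E P)
    (hsub : (∑ i, ∑ j, P i j * w (i, j)) + 3 * d * wmax * imb P ≤ mmc E w + ε') :
    (∑ i, ∑ j, P i j * w (i, j)) ≤ mmc E w + ε' ∧ imb P ≤ ε' / (d * wmax) := by
  have himb : 0 ≤ imb P := sum_nonneg fun _ _ => abs_nonneg _
  have hkey := mmc_le_pairing_add_imb hconn hw hwmax.le hP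
  rw [pairing_apply] at hkey
  have hpen : 0 ≤ 3 * (d : ℝ) * wmax * imb P := by positivity
  refine ⟨by linarith, ?_⟩
  rcases Nat.eq_zero_or_pos d with rfl | hd
  · simp [imb_eq_zero_of_connectsWithin_zero hconn P]
  · rw [le_div_iff₀ (by positivity)]
    linarith

/-- **Near-optimality for the penalized problem gives near-optimality and
near-feasibility for MMC.** If `P ∈ Δ_E` is `ε̃`-suboptimal for
`min_{P ∈ Δ_E} ⟨P,W⟩ + 3 d w_max ‖P𝟏 - Pᵀ𝟏‖₁` (whose optimal value is `μ(G)`),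
then `⟨P,W⟩ ≤ μ(G) + ε̃` and `‖P𝟏 - Pᵀ𝟏‖₁ ≤ ε̃/(d w_max)`. -/
theorem penalized_suboptimal {n : ℕ} (E : Finset (Fin n × Fin n))
    (w : Fin n × Fin n → ℝ) (d : ℕ) (wmax ε' : ℝ)
    (hconn : ∀ i j : Fin n, ConnectsWithin E d i j)
    (hcyc : ∃ c, IsCycle E c)
    (hw : ∀ e ∈ E, |w e| ≤ wmax) (hwmax : 0 < wmax)
    (P : Matrix (Fin n) (Fin n) ℝ) (hP : InDeltaE E P)
    (hsub : (∑ i, ∑ j, P i j * w (i, j)) + 3 * d * wmax * imb P ≤ mmc E w + ε') :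
    (∑ i, ∑ j, P i j * w (i, j)) ≤ mmc E w + ε' ∧ imb P ≤ ε' / (d * wmax) :=
  penalized_suboptimal_general E w d wmax ε' hconn hw hwmax P hP hsub
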